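/- arXiv:1402.4277 — 2 statements merged into one kernel-verified Lean document; each statement's English description precedes it below -/
import Mathlib

section
/- For every compatible family P = (p_v)_{v ∈ V} of V-partitions, the graph B_P = (V, E_P) is connected. -/
/-!
For `u ≠ v` let `sep u v` be the set of vertices `w ∉ {u, v}` whose partition `p_w` separates
`u` from `v`; then `u` and `v` are adjacent in `B_P` exactly when `sep u v` is empty. The
compatibility axiom shows that for every `w ∈ sep u v` both `sep u w` and `sep w v` are proper
subsets of `sep u v`, so induction on `#(sep u v)` joins `u` to `v` through `w`.
-/

/-- A compatible family of `V`-partitions: for each `v ∈ V` a partition of `V`,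
recorded via its block function `blk v u` = the block of the partition `p_v`
containing `u`, such that `p_v[u] ∪ p_u[v] = V` for all distinct `u, v`, and
`{v} ∈ p_v` for all `v`. -/
structure CompFam (V : Type*) where
  blk : V → V → Set V
  mem_self : ∀ v u, u ∈ blk v u
  eq_of_mem : ∀ v u w, w ∈ blk v u → blk v w = blk v u
  self_blk : ∀ v, blk v v = {v}
  compat : ∀ u v : V, u ≠ v → blk v u ∪ blk u v = Set.univ

/-- The graph `B_P = (V, E_P)` associated to a compatible family `P`:
`{u,v} ∈ E_P` iff `p_w[u] = p_w[v]` for all `w ∈ V − {u,v}`. -/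
def BP {V : Type*} (P : CompFam V) : SimpleGraph V where
  Adj u v := u ≠ v ∧ ∀ w, w ≠ u → w ≠ v → P.blk w u = P.blk w v
  symm := ⟨fun u v h => ⟨h.1.symm, fun w h1 h2 => (h.2 w h2 h1).symm⟩⟩
  loopless := ⟨fun u h => h.1 rfl⟩

namespace CompFam

variable {V : Type*} (P : CompFam V)

theorem mem_blk_trans {w x y u : V} (hx : x ∈ P.blk w y) (hu : u ∈ P.blk w x) :
    u ∈ P.blk w y :=
  P.eq_of_mem w y x hx ▸ hu

theorem mem_blk_comm {w u v : V} (h : u ∈ P.blk w v) : v ∈ P.blk w u := by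
  rw [P.eq_of_mem w v u h]
  exact P.mem_self w v

theorem mem_blk_or_mem_blk {u v : V} (huv : u ≠ v) (x : V) : x ∈ P.blk v u ∨ x ∈ P.blk u v :=
  (Set.ext_iff.1 (P.compat u v huv) x).2 trivial

def sep (u v : V) : Set V :=
  {w | w ≠ u ∧ w ≠ v ∧ u ∉ P.blk w v}

theorem sep_comm (u v : V) : P.sep u v = P.sep v u := by
  ext w
  exact ⟨fun ⟨hu, hv, h⟩ => ⟨hv, hu, fun h' => h (P.mem_blk_comm h')⟩,
    fun ⟨hv, hu, h⟩ => ⟨hu, hv, fun h' => h (P.mem_blk_comm h')⟩⟩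

theorem adj_of_sep_eq_empty {u v : V} (huv : u ≠ v) (h : P.sep u v = ∅) : (BP P).Adj u v := by
  refine ⟨huv, fun w hwu hwv => ?_⟩
  by_contra hne
  exact h.subset ⟨hwu, hwv, fun hu => hne (P.eq_of_mem w v u hu)⟩

theorem sep_subset_of_mem {u v w : V} (hw : w ∈ P.sep u v) : P.sep u w ⊆ P.sep u v := by
  obtain ⟨-, hwv, hu_wv⟩ := hw
  rintro z ⟨hzu, hzw, hu_zw⟩
  have hzv : z ≠ v := by
    rintro rfl
    exact (P.mem_blk_or_mem_blk hwv u).elim hu_zw hu_wv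
  refine ⟨hzu, hzv, fun hu_zv => ?_⟩
  have hu_wz : u ∈ P.blk w z := (P.mem_blk_or_mem_blk hzw u).resolve_right hu_zw
  rcases P.mem_blk_or_mem_blk hzw v with hv_wz | hv_zw
  · exact hu_wv (P.mem_blk_trans (P.mem_blk_comm hv_wz) hu_wz)
  · exact hu_zw (P.mem_blk_trans hv_zw hu_zv)

theorem sep_ssubset_left {u v w : V} (hw : w ∈ P.sep u v) : P.sep u w ⊂ P.sep u v :=
  ⟨P.sep_subset_of_mem hw, fun h => (h hw).2.1 rfl⟩

theorem sep_ssubset_right {u v w : V} (hw : w ∈ P.sep u v) : P.sep w v ⊂ P.sep u v := by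
  rw [P.sep_comm u v] at hw ⊢
  rw [P.sep_comm w v]
  exact P.sep_ssubset_left hw

theorem reachable [Finite V] (u v : V) : (BP P).Reachable u v := by
  by_cases huv : u = v
  · exact huv ▸ .rfl
  by_cases h : P.sep u v = ∅
  · exact (P.adj_of_sep_eq_empty huv h).reachable
  obtain ⟨w, hw⟩ := Set.nonempty_iff_ne_empty.2 h
  have hleft := P.sep_ssubset_left hw
  have hright := P.sep_ssubset_right hw
  exact (reachable u w).trans (reachable w v)
termination_by (P.sep u v).ncard
decreasing_by
  · exact Set.ncard_lt_ncard hleft (Set.toFinite _)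
  · exact Set.ncard_lt_ncard hright (Set.toFinite _)

end CompFam

theorem BP_connected {V : Type*} [Fintype V] [Nonempty V] (P : CompFam V) :
    (BP P).Connected :=
  (SimpleGraph.connected_iff _).2 ⟨P.reachable, ‹_›⟩
end

section
/- The map sending each connected block graph G = (V, E) on the finite vertex set V to the family P_G = (π_0(G^(v)))_{v ∈ V} of partitions of V into connected components of the edge-deleted graphs G^(v) is a bijection from the set of connected block graphs on V onto the set of compatible families of V-partitions, with inverse P ↦ B_P = (V, E_P). -/
/-- The graph obtained from `G` by deleting all edges incident to `v`. -/
def delV {V : Type*} (G : SimpleGraph V) (v : V) : SimpleGraph V where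
  Adj a b := G.Adj a b ∧ a ≠ v ∧ b ≠ v
  symm := ⟨fun a b h => ⟨h.1.symm, h.2.2, h.2.1⟩⟩
  loopless := ⟨fun a h => G.loopless.irrefl a h.1⟩

/-- `u` and `v` lie on a common cycle (circuit) of `G`. -/
def hasCommonCycle {V : Type*} (G : SimpleGraph V) (u v : V) : Prop :=
  ∃ (a : V) (c : G.Walk a a), c.IsCycle ∧ u ∈ c.support ∧ v ∈ c.support

/-- A block graph: every maximal 2-connected subgraph (block) is a clique;
equivalently, any two distinct vertices lying on a common cycle are adjacent. -/
def IsBlockGraph {V : Type*} (G : SimpleGraph V) : Prop :=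
  ∀ u v : V, u ≠ v → hasCommonCycle G u v → G.Adj u v


/-!
For a connected graph `G`, the partitions `π₀(G^(v))` are compatible: walking from `x` to `u`,
either `v` is avoided or the walk reaches `v` before `u` (one induction along the walk).

Conversely, for `z ∉ {u, v}` call `z` a separator of `u, v` when `p_z[u] ≠ p_z[v]`. If `w` is a
separator of `u, v`, the separators of `u, w` and of `w, v` form strictly smaller sets, so by
well-founded induction `u` and `v` are joined in `B_P` by a walk through separators only. Hence
`B_P` is connected and `p_w[u]` is exactly the component of `u` in `B_P^(w)`. It is a block graph
because for `w` off a cycle through `u` and `v`, one of the two arcs of the cycle avoids `w`.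

Finally `B_{P_G} = G` for a connected block graph `G`: if no single vertex separates `u` from `v`,
follow a path `u, x, …, v`; inductively `x ∼ v`, and a path from `u` to `v` avoiding `x` closes a
cycle through `u` and `v`, which forces `u ∼ v`.
-/

open SimpleGraph Walk

namespace SimpleGraph

variable {V : Type*} {G : SimpleGraph V} {u v w x y z : V}

lemma delV_le (G : SimpleGraph V) (v : V) : delV G v ≤ G := fun _ _ h => h.1

lemma eq_of_reachable_delV_self (h : (delV G v).Reachable v x) : x = v := by
  obtain ⟨_ | ⟨hadj, _⟩⟩ := h
  · rfl
  · exact absurd rfl hadj.2.1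

lemma Adj.eq_or_reachable_delV (h : G.Adj x y) (hyz : (delV G w).Reachable y z) (hz : z ≠ w) :
    x = w ∨ (delV G w).Reachable x z := by
  refine or_iff_not_imp_left.2 fun hx => ?_
  have hy : y ≠ w := fun hy => hz (eq_of_reachable_delV_self (hy ▸ hyz))
  exact (show (delV G w).Adj x y from ⟨h, hx, hy⟩).reachable.trans hyz

lemma Walk.reachable_delV_of_notMem_support (p : G.Walk x y) (hw : w ∉ p.support) :
    (delV G w).Reachable x y := by
  induction p with
  | nil => rfl
  | cons h q ih =>
    rw [support_cons, List.mem_cons, not_or] at hw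
    exact (h.eq_or_reachable_delV (ih hw.2) fun hy => hw.2 (hy ▸ q.end_mem_support)).resolve_left
      (Ne.symm hw.1)

lemma Walk.reachable_delV_or_reachable_delV (p : G.Walk x u) (huv : u ≠ v) :
    (delV G v).Reachable x u ∨ (delV G u).Reachable x v := by
  induction p with
  | nil => exact .inl .rfl
  | cons h q ih =>
    rcases ih huv with hq | hq
    · rcases h.eq_or_reachable_delV hq huv with rfl | hx
      · exact .inr .rfl
      · exact .inl hx
    · rcases h.eq_or_reachable_delV hq huv.symm with rfl | hx
      · exact .inl .rfl
      · exact .inr hx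

lemma Walk.reachable_delV_of_mem_support (p : G.Walk x y) (hw : w ∉ p.support)
    (hu : u ∈ p.support) : (delV G w).Reachable x u := by
  classical
  exact (p.takeUntil u hu).reachable_delV_of_notMem_support
    fun h => hw (p.support_takeUntil_subset_support hu h)

lemma Walk.IsPath.reachable_delV_of_mem_support {p : G.Walk x w} (hp : p.IsPath)
    (hu : u ∈ p.support) (huw : u ≠ w) : (delV G w).Reachable x u := by
  classical
  exact (p.takeUntil u hu).reachable_delV_of_notMem_support
    (p.endpoint_notMem_support_takeUntil hp hu huw.symm)

lemma Walk.IsCycle.reachable_delV {c : G.Walk x x} (hc : c.IsCycle) (hu : u ∈ c.support)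
    (hv : v ∈ c.support) (hwu : w ≠ u) (hwv : w ≠ v) : (delV G w).Reachable u v := by
  classical
  by_cases hw : w ∈ c.support
  · -- rotated to start at `w`, the cycle minus its first edge is a path ending at `w`
    have hc' : (c.rotate w hw).IsCycle := hc.rotate hw
    have mem_tail {y} (hy : y ∈ c.support) (hyw : y ≠ w) : y ∈ (c.rotate w hw).tail.support := by
      rw [support_tail_of_not_nil _ hc'.not_nil]
      rw [← mem_support_rotate_iff c w hw, ← cons_tail_support, List.mem_cons] at hy
      exact hy.resolve_left hyw
    have hp := hc'.isPath_tail
    exact (hp.reachable_delV_of_mem_support (mem_tail hu hwu.symm) hwu.symm).symm.trans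
      (hp.reachable_delV_of_mem_support (mem_tail hv hwv.symm) hwv.symm)
  · exact (c.reachable_delV_of_mem_support hw hu).symm.trans (c.reachable_delV_of_mem_support hw hv)

end SimpleGraph

section BlockGraph

variable {V : Type*} {G : SimpleGraph V} {u v x : V}

lemma hasCommonCycle_of_reachable_delV (hux : G.Adj u x) (hxv : G.Adj x v) (huv : u ≠ v)
    (h : (delV G x).Reachable u v) : hasCommonCycle G u v := by
  classical
  obtain ⟨r, hr⟩ := h.exists_isPath
  have hx : x ∉ r.support := fun hx =>
    hux.ne (eq_of_reachable_delV_self ⟨(r.takeUntil x hx).reverse⟩)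
  set r' := (r.mapLe (delV_le G x)).reverse
  have hxr' : x ∉ r'.support := by simpa [r', support_mapLe_eq_support] using hx
  have hc : (cons hux (cons hxv r')).IsCycle := by
    rw [cons_isCycle_iff, cons_isPath_iff, edges_cons, List.mem_cons, not_or]
    refine ⟨⟨by simpa [r', isPath_mapLe] using hr, hxr'⟩, ?_, fun he => hxr' ?_⟩
    · simp [huv, hux.ne]
    · exact r'.snd_mem_support_of_mem_edges he
  exact ⟨u, _, hc, start_mem_support _, by simp [r']⟩

lemma IsBlockGraph.adj_of_isPath (hB : IsBlockGraph G) {p : G.Walk u v} (hp : p.IsPath)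
    (huv : u ≠ v) (h : ∀ w, w ≠ u → w ≠ v → (delV G w).Reachable u v) : G.Adj u v := by
  induction p with
  | nil => exact absurd rfl huv
  | @cons u x v hux q ih =>
    rw [cons_isPath_iff] at hp
    by_cases hxv : x = v
    · exact hxv ▸ hux
    have hxv' : G.Adj x v := ih hp.1 hxv fun w hwx hwv => by
      by_cases hwu : w = u
      · exact hwu ▸ q.reachable_delV_of_notMem_support hp.2
      · exact (show (delV G w).Adj x u from ⟨hux.symm, Ne.symm hwx, Ne.symm hwu⟩).reachable.trans
          (h w hwu hwv)
    exact hB u v huv (hasCommonCycle_of_reachable_delV hux hxv' huv (h x hux.ne.symm hxv))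

lemma IsBlockGraph.adj_of_forall_reachable_delV (hB : IsBlockGraph G) (hG : G.Preconnected)
    (huv : u ≠ v) (h : ∀ w, w ≠ u → w ≠ v → (delV G w).Reachable u v) : G.Adj u v :=
  have ⟨_, hp⟩ := (hG u v).exists_isPath
  hB.adj_of_isPath hp huv h

end BlockGraph

namespace CompFam

variable {V : Type*} (P : CompFam V) {u v w x y z : V}

@[ext] lemma ext {P Q : CompFam V} (h : P.blk = Q.blk) : P = Q := by
  cases P; cases Q; cases h; rfl

lemma blk_eq_iff_mem : P.blk w x = P.blk w y ↔ y ∈ P.blk w x :=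
  ⟨fun h => h ▸ P.mem_self w y, fun h => (P.eq_of_mem w x y h).symm⟩

lemma mem_blk_comm_s18 : x ∈ P.blk w y ↔ y ∈ P.blk w x := by
  rw [← blk_eq_iff_mem, ← blk_eq_iff_mem, eq_comm]

lemma mem_blk_self_iff : v ∈ P.blk v u ↔ u = v := by
  rw [mem_blk_comm_s18, self_blk, Set.mem_singleton_iff]

lemma mem_blk_or_mem_blk_s18 (hzw : z ≠ w) (u : V) : z ∈ P.blk w u ∨ w ∈ P.blk z u := by
  have hu : u ∈ P.blk w z ∪ P.blk z w := P.compat z w hzw ▸ Set.mem_univ u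
  simpa only [Set.mem_union, P.mem_blk_comm_s18 (x := u)] using hu

def separators (u v : V) : Set V := {z | z ≠ u ∧ z ≠ v ∧ v ∉ P.blk z u}

lemma separators_comm (u v : V) : P.separators u v = P.separators v u := by
  ext z
  simp only [separators, Set.mem_ofPred_eq, P.mem_blk_comm_s18 (x := v)]
  tauto

lemma separators_ssubset (hw : w ∈ P.separators u v) : P.separators u w ⊂ P.separators u v := by
  obtain ⟨hwu, hwv, hvw⟩ := hw
  refine Set.ssubset_iff_of_subset ?_ |>.2 ⟨w, ⟨hwu, hwv, hvw⟩, fun h => h.2.1 rfl⟩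
  rintro z ⟨hzu, hzw, hwz⟩
  have hzw' : z ∈ P.blk w u := (P.mem_blk_or_mem_blk_s18 hzw u).resolve_right hwz
  refine ⟨hzu, fun hzv => hvw (hzv ▸ hzw'), fun hvz => ?_⟩
  rcases P.mem_blk_or_mem_blk_s18 hzw v with h | h
  · exact hvw (P.blk_eq_iff_mem.1 ((P.eq_of_mem w u z hzw').symm.trans (P.eq_of_mem w v z h)))
  · exact hwz (P.eq_of_mem z u v hvz ▸ h)

lemma exists_walk_BP_through_separators [Finite V] (u v : V) :
    ∃ p : (BP P).Walk u v, ∀ z ∈ p.support, z = u ∨ z = v ∨ z ∈ P.separators u v := by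
  induction hs : P.separators u v using WellFoundedLT.induction generalizing u v with
  | _ s ih =>
    subst hs
    by_cases huv : u = v
    · subst huv
      exact ⟨.nil, by simp⟩
    obtain hempty | ⟨w, hw⟩ := (P.separators u v).eq_empty_or_nonempty
    · have hadj : (BP P).Adj u v := ⟨huv, fun w hwu hwv =>
        P.blk_eq_iff_mem.2 <| not_not.1 fun h => hempty.subset ⟨hwu, hwv, h⟩⟩
      exact ⟨.cons hadj .nil, by simp⟩
    have hsub_left := P.separators_ssubset hw
    have hsub_right : P.separators w v ⊂ P.separators u v := by
      rw [P.separators_comm w v, P.separators_comm u v]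
      exact P.separators_ssubset (P.separators_comm u v ▸ hw)
    obtain ⟨p, hp⟩ := ih _ hsub_left u w rfl
    obtain ⟨q, hq⟩ := ih _ hsub_right w v rfl
    refine ⟨p.append q, fun z hz => ?_⟩
    rcases (mem_support_append_iff p q).1 hz with hz | hz
    · rcases hp z hz with rfl | rfl | h
      exacts [.inl rfl, .inr (.inr hw), .inr (.inr (hsub_left.1 h))]
    · rcases hq z hz with rfl | rfl | h
      exacts [.inr (.inr hw), .inr (.inl rfl), .inr (.inr (hsub_right.1 h))]

lemma blk_eq_of_reachable_delV (h : (delV (BP P) w).Reachable x y) : P.blk w x = P.blk w y := by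
  obtain ⟨p⟩ := h
  induction p with
  | nil => rfl
  | cons h _ ih => exact (h.1.2 w (Ne.symm h.2.1) (Ne.symm h.2.2)).trans ih

lemma reachable_delV_BP_iff [Finite V] : (delV (BP P) w).Reachable u x ↔ x ∈ P.blk w u := by
  refine ⟨fun h => P.blk_eq_of_reachable_delV h ▸ P.mem_self w x, fun hx => ?_⟩
  by_cases hu : u = w
  · rw [hu, self_blk, Set.mem_singleton_iff] at hx
    rw [hu, hx]
  have hxw : x ≠ w := fun hxw => hu (P.mem_blk_self_iff.1 (hxw ▸ hx))
  obtain ⟨p, hp⟩ := P.exists_walk_BP_through_separators u x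
  refine p.reachable_delV_of_notMem_support fun hw => ?_
  rcases hp w hw with h | h | h
  exacts [hu h.symm, hxw h.symm, h.2.2 hx]

lemma preconnected_BP [Finite V] : (BP P).Preconnected := fun u v =>
  (P.exists_walk_BP_through_separators u v).elim fun p _ => p.reachable

lemma isBlockGraph_BP : IsBlockGraph (BP P) := fun _ _ huv ⟨_, _, hc, hu, hv⟩ =>
  ⟨huv, fun _ hwu hwv => P.blk_eq_of_reachable_delV (hc.reachable_delV hu hv hwu hwv)⟩

def ofGraph (G : SimpleGraph V) (hG : G.Preconnected) : CompFam V where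
  blk v u := {x | (delV G v).Reachable u x}
  mem_self _ _ := .rfl
  eq_of_mem _ _ _ h := Set.ext fun _ => ⟨h.trans, h.symm.trans⟩
  self_blk _ := Set.ext fun _ => ⟨eq_of_reachable_delV_self, fun h => h ▸ .rfl⟩
  compat _ _ huv := Set.eq_univ_of_forall fun x =>
    ((hG x _).some.reachable_delV_or_reachable_delV huv).imp Reachable.symm Reachable.symm

lemma BP_ofGraph {G : SimpleGraph V} (hB : IsBlockGraph G) (hG : G.Preconnected) :
    BP (ofGraph G hG) = G := by
  ext u v
  refine ⟨fun ⟨huv, h⟩ => hB.adj_of_forall_reachable_delV hG huv fun w hwu hwv =>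
    (ofGraph G hG).blk_eq_iff_mem.1 (h w hwu hwv), fun h => ⟨h.ne, fun w hwu hwv => ?_⟩⟩
  exact (ofGraph G hG).blk_eq_iff_mem.2
    (show (delV G w).Adj u v from ⟨h, Ne.symm hwu, Ne.symm hwv⟩).reachable

lemma ofGraph_BP [Finite V] : ofGraph (BP P) P.preconnected_BP = P :=
  ext <| funext₂ fun _ _ => Set.ext fun _ => P.reachable_delV_BP_iff

end CompFam

def blockGraphEquivCompFam {V : Type*} [Finite V] [Nonempty V] :
    {G : SimpleGraph V // G.Connected ∧ IsBlockGraph G} ≃ CompFam V where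
  toFun G := CompFam.ofGraph G.1 G.2.1.preconnected
  invFun P := ⟨BP P, ⟨P.preconnected_BP⟩, P.isBlockGraph_BP⟩
  left_inv G := Subtype.ext (CompFam.BP_ofGraph G.2.2 _)
  right_inv P := P.ofGraph_BP

theorem block_graphs_equiv_compatible_families {V : Type*} [Fintype V] [Nonempty V] :
    ∃ e : {G : SimpleGraph V // G.Connected ∧ IsBlockGraph G} ≃ CompFam V,
      (∀ G : {G : SimpleGraph V // G.Connected ∧ IsBlockGraph G},
        (e G).blk = fun v u => {x | (delV G.1 v).Reachable u x}) ∧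
      (∀ P : CompFam V, (e.symm P).1 = BP P) :=
  ⟨blockGraphEquivCompFam, fun _ => rfl, fun _ => rfl⟩
end
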